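/- arXiv:2212.06268 — 6 statements merged into one kernel-verified Lean document; each statement's English description precedes it below -/
import Mathlib

section
/- Let Z be a standard normal random variable (law N(0,1)) independent of a nonnegative real random variable W, let μ ∈ ℝ and σ > 0, and set X = μ + σ Z √W. Then for every t ∈ ℝ the characteristic function of X satisfies E[exp(i t X)] = exp(i μ t) · E[exp(−σ² t² W / 2)]. -/
/-!
Given `W = w`, the variable `σ √w Z` is centred Gaussian with variance `σ² w`, so its
characteristic function at `t` is `exp (-σ² t² w / 2)`. Independence makes the law of `(W, Z)` a
product measure, and Fubini integrates this conditional characteristic function against the law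
of `W`.
-/

open MeasureTheory ProbabilityTheory Complex
open scoped RealInnerProductSpace

lemma ProbabilityTheory.IndepFun.integral_cexp_inner_eq_integral_charFun
    {Ω E : Type*} [MeasurableSpace Ω] {P : Measure Ω} [IsProbabilityMeasure P]
    [NormedAddCommGroup E] [InnerProductSpace ℝ E] [MeasurableSpace E] [BorelSpace E]
    [SecondCountableTopology E] {Y Z : Ω → E}
    (hY : AEMeasurable Y P) (hZ : AEMeasurable Z P) (hYZ : IndepFun Y Z P) :
    ∫ ω, cexp (⟪Z ω, Y ω⟫ * I) ∂P = ∫ ω, charFun (P.map Z) (Y ω) ∂P := by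
  let g : E × E → ℂ := fun p ↦ cexp (⟪p.2, p.1⟫ * I)
  have hg : Continuous g := by fun_prop
  have hlaw : P.map (fun ω ↦ (Y ω, Z ω)) = (P.map Y).prod (P.map Z) :=
    (indepFun_iff_map_prod_eq_prod_map_map hY hZ).mp hYZ
  have hgint : Integrable g ((P.map Y).prod (P.map Z)) :=
    .of_bound hg.aestronglyMeasurable 1 (ae_of_all _ fun p ↦ by simp [g, norm_exp])
  calc ∫ ω, g (Y ω, Z ω) ∂P
      = ∫ p, g p ∂((P.map Y).prod (P.map Z)) := by
        rw [← hlaw, integral_map (hY.prodMk hZ) hg.aestronglyMeasurable]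
    _ = ∫ y, charFun (P.map Z) y ∂(P.map Y) := integral_prod g hgint
    _ = ∫ ω, charFun (P.map Z) (Y ω) ∂P :=
        integral_map hY stronglyMeasurable_charFun.aestronglyMeasurable

theorem charFun_normal_variance_mixture_general
    {Ω : Type*} [MeasurableSpace Ω] (P : Measure Ω) [IsProbabilityMeasure P]
    (Z W : Ω → ℝ) (hZmeas : Measurable Z) (hWmeas : Measurable W)
    (hZ : Measure.map Z P = gaussianReal 0 1)
    (hWnonneg : ∀ ω, 0 ≤ W ω)
    (hindep : IndepFun Z W P)
    (μ : ℝ) (σ : ℝ)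
    (X : Ω → ℝ) (hX : ∀ ω, X ω = μ + σ * Z ω * Real.sqrt (W ω)) :
    ∀ t : ℝ,
      ∫ ω, Complex.exp (Complex.I * t * X ω) ∂P
        = Complex.exp (Complex.I * μ * t)
            * ((∫ ω, Real.exp (-(σ ^ 2 * t ^ 2 * W ω) / 2) ∂P : ℝ) : ℂ) := by
  intro t
  set Y : Ω → ℝ := fun ω ↦ t * σ * √(W ω)
  have hY : Measurable Y := by fun_prop
  have hYZ : IndepFun Y Z P :=
    hindep.symm.comp (φ := fun w ↦ t * σ * √w) (by fun_prop) measurable_id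
  have hsplit : ∀ ω, cexp (I * t * X ω) = cexp (I * μ * t) * cexp (⟪Z ω, Y ω⟫ * I) := by
    intro ω
    rw [← Complex.exp_add, hX, Real.inner_apply]
    push_cast [Y]
    ring_nf
  have hgauss : ∀ ω, charFun (P.map Z) (Y ω) = Real.exp (-(σ ^ 2 * t ^ 2 * W ω) / 2) := by
    intro ω
    rw [hZ, charFun_gaussianReal, ofReal_exp]
    congr 1
    push_cast [Y, mul_pow, ← ofReal_pow, Real.sq_sqrt (hWnonneg ω)]
    ring
  simp_rw [hsplit, integral_const_mul]
  rw [hYZ.integral_cexp_inner_eq_integral_charFun hY.aemeasurable hZmeas.aemeasurable,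
    integral_congr_ae (.of_forall hgauss), integral_complex_ofReal]

/-- **Characteristic function of a normal variance mixture.**
If `Z` is standard normal, independent of a nonnegative random variable `W`, and
`X = μ + σ Z √W` with `σ > 0`, then for every `t ∈ ℝ`,
`E[exp(i t X)] = exp(i μ t) · E[exp(−σ² t² W / 2)]`. -/
theorem charFun_normal_variance_mixture
    {Ω : Type*} [MeasurableSpace Ω] (P : Measure Ω) [IsProbabilityMeasure P]
    (Z W : Ω → ℝ) (hZmeas : Measurable Z) (hWmeas : Measurable W)
    (hZ : Measure.map Z P = gaussianReal 0 1)
    (hWnonneg : ∀ ω, 0 ≤ W ω)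
    (hindep : IndepFun Z W P)
    (μ : ℝ) (σ : ℝ) (hσ : 0 < σ)
    (X : Ω → ℝ) (hX : ∀ ω, X ω = μ + σ * Z ω * Real.sqrt (W ω)) :
    ∀ t : ℝ,
      ∫ ω, Complex.exp (Complex.I * t * X ω) ∂P
        = Complex.exp (Complex.I * μ * t)
            * ((∫ ω, Real.exp (-(σ ^ 2 * t ^ 2 * W ω) / 2) ∂P : ℝ) : ℂ) :=
  charFun_normal_variance_mixture_general P Z W hZmeas hWmeas hZ hWnonneg hindep μ σ X hX
end

section
/- Let Z be a standard normal random variable independent of W, where W follows the Gamma(a, β) distribution with shape a > 0 and rate β > 0, let μ ∈ ℝ and σ > 0, and set X = μ + σ Z √W. Then for every t ∈ ℝ, E[exp(i t X)] = exp(i μ t) · (1 + σ² t² / (2β))^{−a}. -/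
/-!
Conditionally on `W`, the variable `σ Z √W` is centred Gaussian with variance `σ² W`, so its
characteristic function at `t` is `exp (-(σ² t² / 2) W)`. Averaging over `W` turns the
characteristic function of `X` into the Laplace transform of `Gamma(a, β)` at `σ² t² / 2`,
which the gamma integral evaluates to `(1 + σ² t² / (2β))^(-a)`.
-/

open MeasureTheory ProbabilityTheory Complex Set

lemma ae_nonneg_gammaMeasure (a r : ℝ) : ∀ᵐ x ∂gammaMeasure a r, 0 ≤ x := by
  simp only [ae_iff, not_le]
  change gammaMeasure a r (Iio 0) = 0
  rw [gammaMeasure, withDensity_apply _ measurableSet_Iio]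
  exact lintegral_gammaPDF_of_nonpos le_rfl

lemma integral_gammaMeasure {a r : ℝ} (ha : 0 < a) (hr : 0 < r) (f : ℝ → ℝ) :
    ∫ x, f x ∂gammaMeasure a r
      = ∫ x in Ioi 0, r ^ a / Real.Gamma a * x ^ (a - 1) * Real.exp (-(r * x)) * f x := by
  rw [gammaMeasure, integral_withDensity_eq_integral_toReal_smul (f := gammaPDF a r)
    (measurable_gammaPDFReal a r).ennreal_ofReal (ae_of_all _ fun _ => ENNReal.ofReal_lt_top),
    ← integral_Ici_eq_integral_Ioi, ← setIntegral_eq_integral_of_forall_compl_eq_zero]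
  · refine setIntegral_congr_fun measurableSet_Ici fun x (hx : 0 ≤ x) => ?_
    rw [gammaPDF, ENNReal.toReal_ofReal (gammaPDFReal_nonneg ha hr x), gammaPDFReal, if_pos hx,
      smul_eq_mul]
  · intro x (hx : ¬ 0 ≤ x)
    rw [gammaPDF, gammaPDFReal, if_neg hx, ENNReal.ofReal_zero, ENNReal.toReal_zero, zero_smul]

lemma integral_exp_neg_mul_gammaMeasure {a r s : ℝ} (ha : 0 < a) (hr : 0 < r) (hs : 0 < r + s) :
    ∫ x, Real.exp (-(s * x)) ∂gammaMeasure a r = (1 + s / r) ^ (-a) := by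
  have hexp : ∀ x, r ^ a / Real.Gamma a * x ^ (a - 1) * Real.exp (-(r * x)) * Real.exp (-(s * x))
      = r ^ a / Real.Gamma a * (x ^ (a - 1) * Real.exp (-((r + s) * x))) := fun x => by
    rw [mul_assoc, mul_assoc, ← Real.exp_add]; ring_nf
  simp_rw [integral_gammaMeasure ha hr, hexp, integral_const_mul,
    Real.integral_rpow_mul_exp_neg_mul_Ioi ha hs]
  have hΓ : Real.Gamma a ≠ 0 := (Real.Gamma_pos_of_pos ha).ne'
  rw [show 1 + s / r = (r + s) / r by field_simp, Real.rpow_neg (by positivity),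
    Real.div_rpow hs.le hr.le, one_div, Real.inv_rpow hs.le]
  field_simp

lemma integral_cexp_mul_sqrt_gaussianReal_prod {ν : Measure ℝ} [IsFiniteMeasure ν]
    (hν : ∀ᵐ w ∂ν, 0 ≤ w) (c : ℝ) :
    ∫ p, cexp ((c * (p.1 * √p.2) : ℝ) * I) ∂(gaussianReal 0 1).prod ν
      = ∫ w, Real.exp (-(c ^ 2 / 2 * w)) ∂ν := by
  have hint : Integrable (fun p : ℝ × ℝ => cexp ((c * (p.1 * √p.2) : ℝ) * I))
      ((gaussianReal 0 1).prod ν) :=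
    .of_bound (by fun_prop) 1 (ae_of_all _ fun p => (norm_exp_ofReal_mul_I _).le)
  rw [integral_prod_symm _ hint, ← integral_complex_ofReal]
  refine integral_congr_ae (hν.mono fun w hw => ?_)
  calc ∫ z, cexp ((c * (z * √w) : ℝ) * I) ∂gaussianReal 0 1
      = charFun (gaussianReal 0 1) (c * √w) := by
        rw [charFun_apply_real]
        congr with z
        push_cast
        ring_nf
    _ = Real.exp (-(c ^ 2 / 2 * w)) := by
        rw [charFun_gaussianReal, ← ofReal_pow, mul_pow, Real.sq_sqrt hw]
        push_cast
        ring_nf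

theorem charFun_gamma_gh_general
    {Ω : Type*} [MeasurableSpace Ω] (P : Measure Ω) [IsProbabilityMeasure P]
    (a β : ℝ) (ha : 0 < a) (hβ : 0 < β)
    (Z W : Ω → ℝ)
    (hZ : Measure.map Z P = gaussianReal 0 1)
    (hW : Measure.map W P = gammaMeasure a β)
    (hindep : IndepFun Z W P)
    (μ : ℝ) (σ : ℝ)
    (X : Ω → ℝ) (hX : ∀ ω, X ω = μ + σ * Z ω * Real.sqrt (W ω)) :
    ∀ t : ℝ,
      ∫ ω, Complex.exp (Complex.I * t * X ω) ∂P
        = Complex.exp (Complex.I * μ * t)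
            * ((1 + σ ^ 2 * t ^ 2 / (2 * β) : ℂ) ^ (-(a : ℂ))) := by
  intro t
  have hZm : AEMeasurable Z P := aemeasurable_of_map_neZero (by rw [hZ]; infer_instance)
  have : IsProbabilityMeasure (gammaMeasure a β) := isProbabilityMeasure_gammaMeasure ha hβ
  have hWm : AEMeasurable W P := aemeasurable_of_map_neZero (by rw [hW]; infer_instance)
  have hlaw : P.map (fun ω => (Z ω, W ω)) = (gaussianReal 0 1).prod (gammaMeasure a β) := by
    rw [← hZ, ← hW]
    exact (indepFun_iff_map_prod_eq_prod_map_map hZm hWm).mp hindep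
  calc ∫ ω, cexp (I * t * X ω) ∂P
      = cexp (I * μ * t) * ∫ ω, cexp (((σ * t) * (Z ω * √(W ω)) : ℝ) * I) ∂P := by
        simp_rw [hX, ← integral_const_mul, ← Complex.exp_add]
        congr with ω
        push_cast
        ring_nf
    _ = cexp (I * μ * t) * ∫ w, Real.exp (-((σ * t) ^ 2 / 2 * w)) ∂gammaMeasure a β := by
        rw [← integral_cexp_mul_sqrt_gaussianReal_prod (ae_nonneg_gammaMeasure a β), ← hlaw,
          integral_map (hZm.prodMk hWm) (by fun_prop)]
    _ = cexp (I * μ * t) * (1 + σ ^ 2 * t ^ 2 / (2 * β) : ℂ) ^ (-(a : ℂ)) := by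
        rw [integral_exp_neg_mul_gammaMeasure ha hβ (by positivity),
          ofReal_cpow (by positivity)]
        push_cast
        ring_nf

/-- **Characteristic function of the gamma generalized hyperbolic law.**
If `Z` is standard normal, independent of `W ~ Gamma(a, β)` (`a > 0`, `β > 0`), and
`X = μ + σ Z √W` with `σ > 0`, then for every `t ∈ ℝ`,
`E[exp(i t X)] = exp(i μ t) · (1 + σ² t² / (2β))^(−a)`. -/
theorem charFun_gamma_gh
    {Ω : Type*} [MeasurableSpace Ω] (P : Measure Ω) [IsProbabilityMeasure P]
    (a β : ℝ) (ha : 0 < a) (hβ : 0 < β)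
    (Z W : Ω → ℝ) (hZmeas : Measurable Z) (hWmeas : Measurable W)
    (hZ : Measure.map Z P = gaussianReal 0 1)
    (hW : Measure.map W P = gammaMeasure a β)
    (hindep : IndepFun Z W P)
    (μ : ℝ) (σ : ℝ) (hσ : 0 < σ)
    (X : Ω → ℝ) (hX : ∀ ω, X ω = μ + σ * Z ω * Real.sqrt (W ω)) :
    ∀ t : ℝ,
      ∫ ω, Complex.exp (Complex.I * t * X ω) ∂P
        = Complex.exp (Complex.I * μ * t)
            * ((1 + σ ^ 2 * t ^ 2 / (2 * β) : ℂ) ^ (-(a : ℂ))) :=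
  charFun_gamma_gh_general P a β ha hβ Z W hZ hW hindep μ σ X hX
end

section
/- Let Z be a standard normal random variable independent of W, where W follows the Gamma(a, β) distribution with a > 0, β > 0. Then Z √W has the density u ↦ (β^a / (√(2π) Γ(a))) ∫₀^∞ x^{a − 3/2} exp(−(2βx + u²/x)/2) dx on ℝ. -/
open MeasureTheory ProbabilityTheory Real
open scoped ENNReal NNReal

/-! Given `W = w > 0`, `Z √W` is `N(0, w)`, so the law of `Z √W` is the `Gamma(a, β)`-mixture of
the `N(0, w)` laws and has density `u ↦ ∫ gaussianPDF 0 w u dGamma(w)`; multiplying out the gamma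
and Gaussian densities gives the stated integrand. This mixture density is a priori `ℝ≥0∞`-valued;
it integrates to `1`, hence is finite almost everywhere, which is what allows writing it with a
Bochner integral (at `u = 0` with `a ≤ 1/2` the integral diverges). -/

lemma gaussianReal_map_mul_sqrt {w : ℝ} (hw : 0 ≤ w) :
    (gaussianReal 0 1).map (· * √w) = gaussianReal 0 w.toNNReal := by
  rw [gaussianReal_map_mul_const, mul_zero, mul_one]
  congr 1
  ext
  simp [sq_sqrt hw, hw]

lemma measurable_gaussianPDF_toNNReal :
    Measurable fun p : ℝ × ℝ => gaussianPDF 0 p.2.toNNReal p.1 := by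
  simp only [gaussianPDF, gaussianPDFReal]
  fun_prop

lemma measurable_lintegral_gaussianPDF (ν : Measure ℝ) [SFinite ν] :
    Measurable fun u => ∫⁻ w, gaussianPDF 0 w.toNNReal u ∂ν :=
  measurable_gaussianPDF_toNNReal.lintegral_prod_right'

lemma map_mul_sqrt_gaussianReal_prod (ν : Measure ℝ) [SFinite ν] (hν : ∀ᵐ w ∂ν, 0 < w) :
    ((gaussianReal 0 1).prod ν).map (fun p => p.1 * √p.2)
      = volume.withDensity fun u => ∫⁻ w, gaussianPDF 0 w.toNNReal u ∂ν := by
  have hφ : Measurable fun p : ℝ × ℝ => p.1 * √p.2 := by fun_prop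
  ext s hs
  rw [Measure.map_apply hφ hs, Measure.prod_apply_symm (hφ hs), withDensity_apply _ hs,
    lintegral_lintegral_swap measurable_gaussianPDF_toNNReal.aemeasurable]
  refine lintegral_congr_ae ?_
  filter_upwards [hν] with w hw
  rw [← gaussianReal_apply 0 (by simpa using hw), ← gaussianReal_map_mul_sqrt hw.le,
    Measure.map_apply (measurable_mul_const _) hs]
  rfl

lemma ae_pos_gammaMeasure (a β : ℝ) : ∀ᵐ w ∂gammaMeasure a β, 0 < w := by
  have hpdf : Measurable (gammaPDF a β) := (measurable_gammaPDFReal a β).ennreal_ofReal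
  rw [gammaMeasure, ae_withDensity_iff hpdf]
  filter_upwards [Measure.ae_ne volume 0] with w hw0 hw
  exact lt_of_le_of_ne (not_lt.mp fun hneg => hw (gammaPDF_of_neg hneg)) (Ne.symm hw0)

lemma gammaPDF_mul_gaussianPDF {a β w : ℝ} (ha : 0 < a) (hβ : 0 < β) (hw : 0 < w) (u : ℝ) :
    gammaPDF a β w * gaussianPDF 0 w.toNNReal u
      = ENNReal.ofReal (β ^ a / (√(2 * π) * Gamma a))
        * ENNReal.ofReal (w ^ (a - 3 / 2) * exp (-(2 * β * w + u ^ 2 / w) / 2)) := by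
  have hΓ := Gamma_pos_of_pos ha
  rw [gammaPDF_of_nonneg hw.le, gaussianPDF, gaussianPDFReal, Real.coe_toNNReal _ hw.le,
    ← ENNReal.ofReal_mul (by positivity), ← ENNReal.ofReal_mul (by positivity)]
  congr 1
  have hpow : w ^ (a - 1) * (√w)⁻¹ = w ^ (a - 3 / 2) := by
    rw [sqrt_eq_rpow, ← rpow_neg hw.le, ← rpow_add hw]
    ring_nf
  have hexp : exp (-(β * w)) * exp (-(u - 0) ^ 2 / (2 * w))
      = exp (-(2 * β * w + u ^ 2 / w) / 2) := by
    rw [← exp_add]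
    congr 1
    field_simp
    ring
  rw [← hpow, ← hexp, sqrt_mul (by positivity), mul_inv]
  field_simp

lemma lintegral_gaussianPDF_gammaMeasure {a β : ℝ} (ha : 0 < a) (hβ : 0 < β) (u : ℝ) :
    ∫⁻ w, gaussianPDF 0 w.toNNReal u ∂gammaMeasure a β
      = ENNReal.ofReal (β ^ a / (√(2 * π) * Gamma a))
        * ∫⁻ w in Set.Ioi 0,
            ENNReal.ofReal (w ^ (a - 3 / 2) * exp (-(2 * β * w + u ^ 2 / w) / 2)) := by
  have hgamma : Measurable (gammaPDF a β) := (measurable_gammaPDFReal a β).ennreal_ofReal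
  have hgauss : Measurable fun w : ℝ => gaussianPDF 0 w.toNNReal u :=
    measurable_gaussianPDF_toNNReal.comp (measurable_const.prodMk measurable_id)
  rw [← Measure.restrict_eq_self_of_ae_mem (s := Set.Ioi 0) (ae_pos_gammaMeasure a β),
    gammaMeasure, restrict_withDensity measurableSet_Ioi,
    lintegral_withDensity_eq_lintegral_mul _ hgamma hgauss, ← lintegral_const_mul _ (by fun_prop)]
  exact setLIntegral_congr_fun measurableSet_Ioi fun w hw => gammaPDF_mul_gaussianPDF ha hβ hw u

lemma ofReal_integral_eq_lintegral_ofReal_of_ne_top {α : Type*} [MeasurableSpace α]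
    {μ : Measure α} {f : α → ℝ} (hf : AEStronglyMeasurable f μ) (hf_nonneg : 0 ≤ᵐ[μ] f)
    (hf_fin : ∫⁻ x, ENNReal.ofReal (f x) ∂μ ≠ ∞) :
    ENNReal.ofReal (∫ x, f x ∂μ) = ∫⁻ x, ENNReal.ofReal (f x) ∂μ := by
  rw [integral_eq_lintegral_of_nonneg_ae hf_nonneg hf, ENNReal.ofReal_toReal hf_fin]

lemma ae_lt_top_of_isFiniteMeasure_withDensity {α : Type*} [MeasurableSpace α] {μ : Measure α}
    {g : α → ℝ≥0∞} (hg : AEMeasurable g μ) [IsFiniteMeasure (μ.withDensity g)] :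
    ∀ᵐ x ∂μ, g x < ∞ :=
  ae_lt_top' hg (by simpa using measure_ne_top (μ.withDensity g) Set.univ)

/-- **Density of the centered gamma normal variance mixture.**
If `Z` is standard normal, independent of `W ~ Gamma(a, β)` (`a > 0`, `β > 0`), then
`Z √W` has density `u ↦ (β^a / (√(2π) Γ(a))) ∫₀^∞ x^(a − 3/2) exp(−(2βx + u²/x)/2) dx`
on `ℝ`. -/
theorem density_gamma_normal_variance_mixture
    {Ω : Type*} [MeasurableSpace Ω] (P : Measure Ω) [IsProbabilityMeasure P]
    (a β : ℝ) (ha : 0 < a) (hβ : 0 < β)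
    (Z W : Ω → ℝ) (hZmeas : Measurable Z) (hWmeas : Measurable W)
    (hZ : Measure.map Z P = gaussianReal 0 1)
    (hW : Measure.map W P = gammaMeasure a β)
    (hindep : IndepFun Z W P) :
    Measure.map (fun ω => Z ω * Real.sqrt (W ω)) P
      = volume.withDensity fun u => ENNReal.ofReal
          ((β ^ a / (Real.sqrt (2 * π) * Real.Gamma a)) *
            ∫ x in Set.Ioi (0 : ℝ),
              x ^ (a - 3 / 2) * Real.exp (-(2 * β * x + u ^ 2 / x) / 2)) := by
  have : IsProbabilityMeasure (gammaMeasure a β) := isProbabilityMeasure_gammaMeasure ha hβ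
  have hjoint : P.map (fun ω => (Z ω, W ω)) = (gaussianReal 0 1).prod (gammaMeasure a β) := by
    rw [← hZ, ← hW]
    exact hindep.map_prod_eq_prod_map_map hZmeas.aemeasurable hWmeas.aemeasurable
  have hlaw : P.map (fun ω => Z ω * √(W ω)) = volume.withDensity
      fun u => ∫⁻ w, gaussianPDF 0 w.toNNReal u ∂gammaMeasure a β := by
    rw [← map_mul_sqrt_gaussianReal_prod _ (ae_pos_gammaMeasure a β), ← hjoint,
      Measure.map_map (by fun_prop) (hZmeas.prodMk hWmeas)]
    rfl
  have : IsProbabilityMeasure (volume.withDensity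
      fun u => ∫⁻ w, gaussianPDF 0 w.toNNReal u ∂gammaMeasure a β) := by
    rw [← hlaw]
    exact Measure.isProbabilityMeasure_map (by fun_prop)
  rw [hlaw]
  refine withDensity_congr_ae ?_
  filter_upwards [ae_lt_top_of_isFiniteMeasure_withDensity
    (measurable_lintegral_gaussianPDF (gammaMeasure a β)).aemeasurable] with u hu
  have hC : 0 < β ^ a / (√(2 * π) * Gamma a) := by
    have := Gamma_pos_of_pos ha
    positivity
  rw [lintegral_gaussianPDF_gammaMeasure ha hβ] at hu ⊢
  rw [ENNReal.ofReal_mul hC.le, ofReal_integral_eq_lintegral_ofReal_of_ne_top (by fun_prop) ?_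
    (ENNReal.lt_top_of_mul_ne_top_right hu.ne (by simpa using hC)).ne]
  exact ae_restrict_of_forall_mem measurableSet_Ioi fun x hx =>
    mul_nonneg (rpow_nonneg (le_of_lt hx) _) (exp_nonneg _)
end

section
/- Fix a > 0, β > 0, μ ∈ ℝ, σ > 0 and n ≥ 1. Let ν denote the law of μ + σ Z √W where Z is standard normal independent of W ~ Gamma(a, β), and let ν_n denote the law of μ/n + σ Z' √W' where Z' is standard normal independent of W' ~ Gamma(a/n, β). Then ν equals the n-fold convolution of ν_n with itself; equivalently, if X₁, …, X_n are independent each with law ν_n, then X₁ + ⋯ + X_n has law ν. (This expresses that the gamma-gh law is infinitely divisible.) -/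
/-!
Conditionally on `W = w`, the variable `μ + σ Z √W` is `N(μ, σ² w)`, so its characteristic function
is `exp(iμt) E[exp(-σ²t²W/2)] = exp(iμt) (β / (β + σ²t²/2))^a` by the Laplace transform of the
gamma law. This is the `n`-th power of the characteristic function of `gamma-gh(a/n, β, μ/n, σ)`,
and a finite measure on `ℝ` is determined by its characteristic function.
-/

open MeasureTheory ProbabilityTheory

/-- The gamma generalized hyperbolic law `gamma-gh(a, β, μ, σ)`: the law of
`μ + σ Z √W` where `Z` is standard normal independent of `W ~ Gamma(a, β)`. -/
noncomputable def gammaGH (a β μ σ : ℝ) : Measure ℝ :=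
  Measure.map (fun p : ℝ × ℝ => μ + σ * p.1 * Real.sqrt p.2)
    ((gaussianReal 0 1).prod (gammaMeasure a β))

open Real

namespace ProbabilityTheory

lemma measurable_gammaPDF (a β : ℝ) : Measurable (gammaPDF a β) :=
  (measurable_gammaPDFReal a β).ennreal_ofReal

lemma ae_nonneg_gammaMeasure (a β : ℝ) : ∀ᵐ w ∂gammaMeasure a β, 0 ≤ w := by
  rw [gammaMeasure, ae_withDensity_iff (measurable_gammaPDF a β)]
  exact ae_of_all _ fun w hw => not_lt.mp fun hneg => hw (gammaPDF_of_neg hneg)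

variable {a β : ℝ}

lemma integral_exp_neg_mul_gammaMeasure (ha : 0 < a) (hβ : 0 < β) {s : ℝ} (hs : 0 < β + s) :
    ∫ w, rexp (-(s * w)) ∂gammaMeasure a β = (β / (β + s)) ^ a := by
  have hdensity : ∀ w ∈ Set.Ici (0 : ℝ), (gammaPDF a β w).toReal • rexp (-(s * w))
      = β ^ a / Gamma a * (w ^ (a - 1) * rexp (-((β + s) * w))) := by
    intro w (hw : 0 ≤ w)
    have := Gamma_pos_of_pos ha
    rw [gammaPDF_of_nonneg hw, ENNReal.toReal_ofReal (by positivity), smul_eq_mul,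
      mul_assoc, mul_assoc, ← Real.exp_add]
    ring_nf
  rw [gammaMeasure, integral_withDensity_eq_integral_toReal_smul (measurable_gammaPDF a β)
      (ae_of_all _ fun _ => ENNReal.ofReal_lt_top),
    ← setIntegral_eq_integral_of_forall_compl_eq_zero (s := Set.Ici 0) fun w hw => by
      rw [gammaPDF_of_neg (not_le.mp hw), ENNReal.toReal_zero, zero_smul],
    setIntegral_congr_fun measurableSet_Ici hdensity, integral_Ici_eq_integral_Ioi,
    integral_const_mul, integral_rpow_mul_exp_neg_mul_Ioi ha hs, div_rpow hβ.le hs.le,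
    div_rpow zero_le_one hs.le, one_rpow]
  field_simp [(Gamma_pos_of_pos ha).ne']

open Complex in
lemma charFun_gammaGH (ha : 0 < a) (hβ : 0 < β) (μ σ t : ℝ) :
    charFun (gammaGH a β μ σ) t = cexp (t * μ * I) * ((β / (β + σ ^ 2 * t ^ 2 / 2)) ^ a : ℝ) := by
  have := isProbabilityMeasure_gammaMeasure ha hβ
  have hgauss : ∀ w, 0 ≤ w → ∫ z, cexp (t * (μ + σ * z * √w : ℝ) * I) ∂gaussianReal 0 1
      = cexp (t * μ * I) * (rexp (-(σ ^ 2 * t ^ 2 / 2 * w)) : ℝ) := by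
    intro w hw
    calc ∫ z, cexp (t * (μ + σ * z * √w : ℝ) * I) ∂gaussianReal 0 1
        = ∫ z, cexp (t * μ * I) * cexp ((t * σ * √w : ℝ) * z * I) ∂gaussianReal 0 1 := by
          congr 1 with z
          rw [← Complex.exp_add]
          push_cast
          ring_nf
      _ = cexp (t * μ * I) * charFun (gaussianReal 0 1) (t * σ * √w) := by
          rw [integral_const_mul, charFun_apply_real]
      _ = _ := by
          rw [charFun_gaussianReal]
          push_cast
          rw [mul_pow, mul_pow, ← Complex.ofReal_pow √w, Real.sq_sqrt hw]
          ring_nf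
  have hbounded : Integrable (fun p : ℝ × ℝ => cexp (t * (μ + σ * p.1 * √p.2 : ℝ) * I))
      ((gaussianReal 0 1).prod (gammaMeasure a β)) :=
    .of_bound (by fun_prop) 1 (ae_of_all _ fun p => by
      rw [← Complex.ofReal_mul, Complex.norm_exp_ofReal_mul_I])
  rw [charFun_apply_real, gammaGH, integral_map (by fun_prop) (by fun_prop),
    integral_prod_symm _ hbounded,
    integral_congr_ae ((ae_nonneg_gammaMeasure a β).mono hgauss), integral_const_mul,
    integral_complex_ofReal, integral_exp_neg_mul_gammaMeasure ha hβ (by positivity)]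

lemma isProbabilityMeasure_gammaGH (ha : 0 < a) (hβ : 0 < β) (μ σ : ℝ) :
    IsProbabilityMeasure (gammaGH a β μ σ) := by
  have := isProbabilityMeasure_gammaMeasure ha hβ
  exact Measure.isProbabilityMeasure_map (by fun_prop)

lemma charFun_gammaGH_div_pow (ha : 0 < a) (hβ : 0 < β) (μ σ t : ℝ) {n : ℕ} (hn : n ≠ 0) :
    charFun (gammaGH (a / n) β (μ / n) σ) t ^ n = charFun (gammaGH a β μ σ) t := by
  have hn' : (0 : ℝ) < n := by positivity
  rw [charFun_gammaGH (by positivity) hβ, charFun_gammaGH ha hβ, mul_pow, ← Complex.exp_nat_mul,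
    ← Complex.ofReal_pow, ← Real.rpow_natCast, ← Real.rpow_mul (by positivity),
    div_mul_cancel₀ a hn'.ne']
  congr 2
  push_cast
  field_simp

end ProbabilityTheory

theorem gammaGH_infinitely_divisible_general
    {Ω : Type*} [MeasurableSpace Ω] (P : Measure Ω) [IsProbabilityMeasure P]
    (a β μ σ : ℝ) (ha : 0 < a) (hβ : 0 < β)
    (n : ℕ) (hn : 1 ≤ n)
    (X : Fin n → Ω → ℝ) (hXmeas : ∀ i, Measurable (X i))
    (hXindep : iIndepFun X P)
    (hXlaw : ∀ i, Measure.map (X i) P = gammaGH (a / n) β (μ / n) σ) :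
    Measure.map (fun ω => ∑ i, X i ω) P = gammaGH a β μ σ := by
  have := isProbabilityMeasure_gammaGH ha hβ μ σ
  refine Measure.ext_of_charFun ?_
  calc charFun (P.map fun ω => ∑ i, X i ω)
      = ∏ i, charFun (P.map (X i)) :=
        hXindep.charFun_map_fun_sum_eq_prod fun i => (hXmeas i).aemeasurable
    _ = charFun (gammaGH (a / n) β (μ / n) σ) ^ n := by simp [hXlaw]
    _ = charFun (gammaGH a β μ σ) :=
        funext fun t => charFun_gammaGH_div_pow ha hβ μ σ t (by omega)

/-- **Infinite divisibility of the gamma generalized hyperbolic law.**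
For `a > 0`, `β > 0`, `σ > 0`, `μ ∈ ℝ` and `n ≥ 1`: if `X₁, …, X_n` are independent,
each with law `gamma-gh(a/n, β, μ/n, σ)`, then `X₁ + ⋯ + X_n` has law
`gamma-gh(a, β, μ, σ)`. -/
theorem gammaGH_infinitely_divisible
    {Ω : Type*} [MeasurableSpace Ω] (P : Measure Ω) [IsProbabilityMeasure P]
    (a β μ σ : ℝ) (ha : 0 < a) (hβ : 0 < β) (hσ : 0 < σ)
    (n : ℕ) (hn : 1 ≤ n)
    (X : Fin n → Ω → ℝ) (hXmeas : ∀ i, Measurable (X i))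
    (hXindep : iIndepFun X P)
    (hXlaw : ∀ i, Measure.map (X i) P = gammaGH (a / n) β (μ / n) σ) :
    Measure.map (fun ω => ∑ i, X i ω) P = gammaGH a β μ σ :=
  gammaGH_infinitely_divisible_general P a β μ σ ha hβ n hn X hXmeas hXindep hXlaw
end

section
/- Fix a > 0, β > 0, σ > 0, T > 0, and let I₁ = ∫₁^∞ x^{−1/2} e^{−x} dx. For each k ≥ 1 let π_k = (0 = t₀^{(k)} < t₁^{(k)} < ⋯ < t_{ℓ(k)}^{(k)} = T) be a partition of [0, T] whose mesh m(π_k) = max_j (t_{j+1}^{(k)} − t_j^{(k)}) tends to 0 as k → ∞. For each k and each 0 ≤ j ≤ ℓ(k) − 1, let Δ_{k,j} = σ |Z_{k,j}| √(W_{k,j}) where Z_{k,j} is standard normal independent of W_{k,j} ~ Gamma(a δ_{k,j}, β), δ_{k,j} = t_{j+1}^{(k)} − t_j^{(k)}, and set V_k = Σ_{j=0}^{ℓ(k)−1} Δ_{k,j}. Then limsup_{k → ∞} E[V_k] ≤ σ √(2/(π β)) · e (2 + I₁) · a T and liminf_{k → ∞} E[V_k] ≥ σ √(2/(π β)) ·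 (2/e + I₁) · a T. -/
/-!
The expectation of `V_k` can be computed exactly. Since `|Z|` and `√W` are independent,
`E|Z| = √(2/π)` and `E√W = Γ(s + 1/2) / (Γ(s) √β)` for `W ~ Gamma(s, β)`, so with
`s_j = a δ_{k,j}` (which sum to `a T`) we get
`E[V_k] = σ √(2/(πβ)) Σ_j s_j Γ(s_j + 1/2) / Γ(s_j + 1)`.
As the mesh tends to `0`, all `s_j` tend to `0` uniformly in `j`, and the ratio tends to
`Γ(1/2) / Γ(1) = √π`, so `E[V_k]` converges to `σ √(2/(πβ)) √π a T`. The two constants of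
the statement bracket `√π` because `0 ≤ I₁ ≤ 1/e`.
-/

open MeasureTheory ProbabilityTheory Real Filter Set Topology

lemma integral_abs_gaussianReal : ∫ x, |x| ∂gaussianReal 0 1 = √(2 / π) := by
  have half_line : ∫ x in Ioi (0 : ℝ), x * exp (-x ^ 2 / 2) = 1 := by
    have h := integral_rpow_mul_exp_neg_mul_rpow (p := 2) (q := 1) (b := 1 / 2)
      two_pos (by norm_num) (by norm_num)
    norm_num [Real.Gamma_one] at h
    rw [← h]
    refine setIntegral_congr_fun measurableSet_Ioi fun x _ => ?_
    norm_num [neg_div, div_eq_inv_mul]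
  rw [integral_gaussianReal_eq_integral_smul one_ne_zero]
  simp only [gaussianPDFReal, NNReal.coe_one, mul_one, sub_zero, smul_eq_mul]
  calc ∫ x, (√(2 * π))⁻¹ * exp (-x ^ 2 / 2) * |x|
      = (√(2 * π))⁻¹ * ∫ x, |x| * exp (-|x| ^ 2 / 2) := by
        rw [← integral_const_mul]; congr 1 with x; rw [sq_abs]; ring
    _ = (√(2 * π))⁻¹ * 2 := by
        rw [integral_comp_abs (f := fun x => x * exp (-x ^ 2 / 2)), half_line, mul_one]
    _ = √(2 / π) := by
        rw [sqrt_div zero_le_two, sqrt_mul zero_le_two]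
        have hsq2 := sq_sqrt (zero_le_two (α := ℝ))
        have hsqπ : 0 < √π := sqrt_pos.mpr pi_pos
        field_simp
        linarith

lemma integral_gammaMeasure_eq_setIntegral {s β : ℝ} (hs : 0 < s) (hβ : 0 < β)
    (f : ℝ → ℝ) :
    ∫ x, f x ∂gammaMeasure s β
      = ∫ x in Ioi 0, β ^ s / Gamma s * (x ^ (s - 1) * exp (-(β * x))) * f x := by
  rw [gammaMeasure, integral_withDensity_eq_integral_toReal_smul (f := gammaPDF s β)
      (measurable_gammaPDFReal s β).ennreal_ofReal (ae_of_all _ fun _ => ENNReal.ofReal_lt_top),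
    ← setIntegral_eq_integral_of_forall_compl_eq_zero (s := Ici 0), integral_Ici_eq_integral_Ioi]
  · refine setIntegral_congr_fun measurableSet_Ioi fun x (hx : 0 < x) => ?_
    rw [gammaPDF, ENNReal.toReal_ofReal (gammaPDFReal_nonneg hs hβ x), gammaPDFReal,
      if_pos hx.le, smul_eq_mul, mul_assoc (β ^ s / Gamma s)]
  · intro x (hx : ¬ 0 ≤ x)
    simp [gammaPDF, gammaPDFReal, hx]

lemma integral_rpow_gammaMeasure {s β p : ℝ} (hs : 0 < s) (hβ : 0 < β) (hsp : 0 < s + p) :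
    ∫ x, x ^ p ∂gammaMeasure s β = Gamma (s + p) / (Gamma s * β ^ p) := by
  rw [integral_gammaMeasure_eq_setIntegral hs hβ]
  calc ∫ x in Ioi 0, β ^ s / Gamma s * (x ^ (s - 1) * exp (-(β * x))) * x ^ p
      = β ^ s / Gamma s * ∫ x in Ioi 0, x ^ (s + p - 1) * exp (-(β * x)) := by
        rw [← integral_const_mul]
        refine setIntegral_congr_fun measurableSet_Ioi fun x (hx : 0 < x) => ?_
        rw [show s + p - 1 = (s - 1) + p by ring, rpow_add hx]
        ring
    _ = Gamma (s + p) / (Gamma s * β ^ p) := by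
        rw [integral_rpow_mul_exp_neg_mul_Ioi hsp hβ, one_div, inv_rpow hβ.le, rpow_add hβ]
        have := Gamma_pos_of_pos hs
        have := rpow_pos_of_pos hβ s
        have := rpow_pos_of_pos hβ p
        field_simp

lemma integral_sqrt_gammaMeasure {s β : ℝ} (hs : 0 < s) (hβ : 0 < β) :
    ∫ x, √x ∂gammaMeasure s β = Gamma (s + 1 / 2) / (Gamma s * √β) := by
  simp_rw [sqrt_eq_rpow]
  exact integral_rpow_gammaMeasure hs hβ (by linarith)

lemma ProbabilityTheory.HasLaw.of_map_eq {Ω 𝓧 : Type*} [MeasurableSpace Ω]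
    [MeasurableSpace 𝓧] {P : Measure Ω} {μ : Measure 𝓧} [NeZero μ] {X : Ω → 𝓧}
    (h : P.map X = μ) :
    HasLaw X μ P :=
  -- `P.map X` is the junk value `0` unless `X` is a.e.-measurable.
  ⟨.of_map_ne_zero (h ▸ NeZero.ne μ), h⟩

section Increment

variable {Ω : Type*} [MeasurableSpace Ω] {P : Measure Ω} {s β : ℝ} {Z W : Ω → ℝ}

lemma integral_abs_mul_sqrt_of_indepFun (hs : 0 < s) (hβ : 0 < β)
    (hZ : HasLaw Z (gaussianReal 0 1) P) (hW : HasLaw W (gammaMeasure s β) P)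
    (hZW : IndepFun Z W P) :
    ∫ ω, |Z ω| * √(W ω) ∂P
      = √(2 / (π * β)) * (s * (Gamma (s + 1 / 2) / Gamma (s + 1))) := by
  have hmoments : (∫ ω, |Z ω| ∂P) * (∫ ω, √(W ω) ∂P)
      = √(2 / π) * (Gamma (s + 1 / 2) / (Gamma s * √β)) := by
    rw [← integral_abs_gaussianReal, ← integral_sqrt_gammaMeasure hs hβ,
      ← hZ.integral_comp (by fun_prop), ← hW.integral_comp (by fun_prop)]
    rfl
  rw [hZW.integral_fun_comp_mul_comp (f := fun x => |x|) (g := Real.sqrt) hZ.aemeasurable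
      hW.aemeasurable (by fun_prop) (by fun_prop), hmoments, Gamma_add_one hs.ne',
    show 2 / (π * β) = 2 / π / β by rw [div_div], sqrt_div' _ hβ.le]
  have := Gamma_pos_of_pos hs
  field_simp

lemma integrable_abs_mul_sqrt_of_indepFun (hs : 0 < s) (hβ : 0 < β)
    (hZ : HasLaw Z (gaussianReal 0 1) P) (hW : HasLaw W (gammaMeasure s β) P)
    (hZW : IndepFun Z W P) :
    Integrable (fun ω => |Z ω| * √(W ω)) P := by
  refine .of_integral_ne_zero ?_
  rw [integral_abs_mul_sqrt_of_indepFun hs hβ hZ hW hZW]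
  have := Gamma_pos_of_pos (show 0 < s + 1 by linarith)
  have := Gamma_pos_of_pos (show 0 < s + 1 / 2 by linarith)
  have : 0 < 2 / (π * β) := by positivity
  positivity

end Increment

lemma integral_sum_mul_abs_mul_sqrt_of_indepFun {Ω ι : Type*} [MeasurableSpace Ω]
    {P : Measure Ω} {J : Finset ι} {s : ι → ℝ} {β : ℝ} {Z W : ι → Ω → ℝ} (σ : ℝ)
    (hs : ∀ j ∈ J, 0 < s j) (hβ : 0 < β)
    (hZ : ∀ j ∈ J, HasLaw (Z j) (gaussianReal 0 1) P)
    (hW : ∀ j ∈ J, HasLaw (W j) (gammaMeasure (s j) β) P)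
    (hZW : ∀ j ∈ J, IndepFun (Z j) (W j) P) :
    ∫ ω, ∑ j ∈ J, σ * |Z j ω| * √(W j ω) ∂P
      = σ * √(2 / (π * β)) * ∑ j ∈ J, s j * (Gamma (s j + 1 / 2) / Gamma (s j + 1)) := by
  have hint := fun j hj =>
    integrable_abs_mul_sqrt_of_indepFun (hs j hj) hβ (hZ j hj) (hW j hj) (hZW j hj)
  simp_rw [mul_assoc σ]
  rw [integral_finsetSum _ fun j hj => (hint j hj).const_mul σ, Finset.mul_sum, Finset.mul_sum]
  refine Finset.sum_congr rfl fun j hj => ?_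
  rw [integral_const_mul,
    integral_abs_mul_sqrt_of_indepFun (hs j hj) hβ (hZ j hj) (hW j hj) (hZW j hj)]

lemma continuousAt_Gamma_of_pos {s : ℝ} (hs : 0 < s) : ContinuousAt Gamma s :=
  (differentiableAt_Gamma fun m h => by linarith [h ▸ hs, m.cast_nonneg (α := ℝ)]).continuousAt

lemma tendsto_Gamma_add_half_div_Gamma_add_one :
    Tendsto (fun s => Gamma (s + 1 / 2) / Gamma (s + 1)) (𝓝 0) (𝓝 √π) := by
  have h : ContinuousAt (fun s => Gamma (s + 1 / 2) / Gamma (s + 1)) 0 := by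
    refine .div ?_ ?_ (by norm_num)
    · exact (continuousAt_Gamma_of_pos (by norm_num)).comp
        (f := fun s : ℝ => s + 1 / 2) (by fun_prop)
    · exact (continuousAt_Gamma_of_pos (by norm_num)).comp
        (f := fun s : ℝ => s + 1) (by fun_prop)
  convert h.tendsto using 2
  norm_num [Gamma_one_half_eq]

lemma Finset.eventually_forall_lt_of_tendsto_sup' {α ι : Type*} {l : Filter α}
    {J : α → Finset ι} (hJ : ∀ k, (J k).Nonempty) {f : α → ι → ℝ}
    (h : Tendsto (fun k => (J k).sup' (hJ k) (f k)) l (𝓝 0)) {ε : ℝ} (hε : 0 < ε) :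
    ∀ᶠ k in l, ∀ j ∈ J k, f k j < ε :=
  (h.eventually (gt_mem_nhds hε)).mono fun k hk _ hj => (Finset.le_sup' (f k) hj).trans_lt hk

lemma tendsto_sum_mul_of_forall_lt {α ι : Type*} {l : Filter α} {J : α → Finset ι}
    {x : α → ι → ℝ} {G : ℝ → ℝ} {L S : ℝ} (hG : Tendsto G (𝓝[>] 0) (𝓝 L))
    (hpos : ∀ k, ∀ j ∈ J k, 0 < x k j) (hsum : ∀ k, ∑ j ∈ J k, x k j = S)
    (hsmall : ∀ ε > 0, ∀ᶠ k in l, ∀ j ∈ J k, x k j < ε) :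
    Tendsto (fun k => ∑ j ∈ J k, x k j * G (x k j)) l (𝓝 (L * S)) := by
  rw [Metric.tendsto_nhds]
  intro ε hε
  have hη : 0 < ε / (|S| + 1) := by positivity
  obtain ⟨δ, hδ, hGδ⟩ := Metric.eventually_nhds_iff.mp
    (eventually_nhdsWithin_iff.mp (Metric.tendsto_nhds.mp hG _ hη))
  filter_upwards [hsmall δ hδ] with k hk
  have hS : ∑ j ∈ J k, x k j * (G (x k j) - L) = ∑ j ∈ J k, x k j * G (x k j) - L * S := by
    rw [← hsum k, Finset.mul_sum, ← Finset.sum_sub_distrib]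
    exact Finset.sum_congr rfl fun j _ => by ring
  rw [Real.dist_eq, ← hS]
  calc |∑ j ∈ J k, x k j * (G (x k j) - L)|
      ≤ ∑ j ∈ J k, x k j * (ε / (|S| + 1)) := by
        refine (Finset.abs_sum_le_sum_abs _ _).trans (Finset.sum_le_sum fun j hj => ?_)
        have hxj := hpos k j hj
        rw [abs_mul, abs_of_pos hxj]
        refine mul_le_mul_of_nonneg_left ?_ hxj.le
        refine (hGδ ?_ hxj).le
        rw [Real.dist_eq, sub_zero, abs_of_pos hxj]
        exact hk j hj
    _ = S * (ε / (|S| + 1)) := by rw [← Finset.sum_mul, hsum k]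
    _ < ε := by
        rw [mul_div_assoc', div_lt_iff₀ (by positivity)]
        nlinarith [le_abs_self S]

lemma setIntegral_Ioi_one_rpow_neg_half_mul_exp_neg_nonneg :
    0 ≤ ∫ x in Ioi (1 : ℝ), x ^ (-(1 : ℝ) / 2) * exp (-x) :=
  setIntegral_nonneg measurableSet_Ioi fun x (hx : 1 < x) => by positivity

lemma setIntegral_Ioi_one_rpow_neg_half_mul_exp_neg_le :
    ∫ x in Ioi (1 : ℝ), x ^ (-(1 : ℝ) / 2) * exp (-x) ≤ exp (-1) := by
  have hexp : IntegrableOn (fun x : ℝ => exp (-x)) (Ioi 1) := by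
    simpa using exp_neg_integrableOn_Ioi (1 : ℝ) one_pos
  have hle : ∀ x ∈ Ioi (1 : ℝ), x ^ (-(1 : ℝ) / 2) * exp (-x) ≤ exp (-x) :=
    fun x (hx : 1 < x) => mul_le_of_le_one_left (exp_pos _).le
      (rpow_le_one_of_one_le_of_nonpos hx.le (by norm_num))
  have hint : IntegrableOn (fun x : ℝ => x ^ (-(1 : ℝ) / 2) * exp (-x)) (Ioi 1) := by
    refine hexp.mono' (by fun_prop) ((ae_restrict_iff' measurableSet_Ioi).mpr (ae_of_all _ ?_))
    intro x (hx : 1 < x)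
    rw [Real.norm_of_nonneg (by positivity)]
    exact hle x hx
  calc ∫ x in Ioi (1 : ℝ), x ^ (-(1 : ℝ) / 2) * exp (-x)
      ≤ ∫ x in Ioi (1 : ℝ), exp (-x) := setIntegral_mono_on hint hexp measurableSet_Ioi hle
    _ = exp (-1) := integral_exp_neg_Ioi 1

lemma two_div_exp_one_add_lt_sqrt_pi {I : ℝ} (hI : I ≤ exp (-1)) : 2 / exp 1 + I < √π := by
  have he : 2.7182818283 < exp 1 := exp_one_gt_d9
  have hπ : 1.5 < √π := (lt_sqrt (by norm_num)).mpr (by nlinarith [pi_gt_three])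
  have h3 : 3 / exp 1 < √π := by
    rw [div_lt_iff₀ (exp_pos 1)]
    nlinarith
  rw [exp_neg, ← one_div] at hI
  linarith [show 2 / exp 1 + 1 / exp 1 = 3 / exp 1 by ring]

lemma sqrt_pi_lt_exp_one_mul_two_add {I : ℝ} (hI : 0 ≤ I) : √π < exp 1 * (2 + I) := by
  have he : 2.7182818283 < exp 1 := exp_one_gt_d9
  have h : √π < 2 * exp 1 := (sqrt_lt' (by positivity)).mpr (by nlinarith [pi_lt_d2])
  nlinarith

theorem expected_variation_bounds_gamma_gh_general
    {Ω : Type*} [MeasurableSpace Ω] (P : Measure Ω)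
    (a β σ T : ℝ) (ha : 0 < a) (hβ : 0 < β) (hσ : 0 < σ) (hT : 0 < T)
    (I₁ : ℝ) (hI₁ : I₁ = ∫ x in Set.Ioi (1 : ℝ), x ^ (-(1 : ℝ) / 2) * Real.exp (-x))
    -- the partitions `π_k = (0 = t k 0 < t k 1 < ⋯ < t k (ℓ k) = T)`
    (ℓ : ℕ → ℕ) (hℓ : ∀ k, 0 < ℓ k) (t : ℕ → ℕ → ℝ)
    (ht0 : ∀ k, t k 0 = 0) (htT : ∀ k, t k (ℓ k) = T)
    (hmono : ∀ k, ∀ j < ℓ k, t k j < t k (j + 1))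
    -- the mesh `m(π_k)` tends to `0`
    (hmesh : Tendsto
      (fun k => (Finset.range (ℓ k)).sup'
        (Finset.nonempty_range_iff.mpr (hℓ k).ne') (fun j => t k (j + 1) - t k j))
      atTop (nhds 0))
    -- the random variables
    (Z W : ℕ → ℕ → Ω → ℝ)
    (hZlaw : ∀ k, ∀ j < ℓ k, Measure.map (Z k j) P = gaussianReal 0 1)
    (hWlaw : ∀ k, ∀ j < ℓ k,
      Measure.map (W k j) P = gammaMeasure (a * (t k (j + 1) - t k j)) β)
    (hindep : ∀ k j, IndepFun (Z k j) (W k j) P)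
    (Δ : ℕ → ℕ → Ω → ℝ)
    (hΔ : ∀ k j ω, Δ k j ω = σ * |Z k j ω| * Real.sqrt (W k j ω))
    (V : ℕ → Ω → ℝ) (hV : ∀ k ω, V k ω = ∑ j ∈ Finset.range (ℓ k), Δ k j ω) :
    limsup (fun k => ∫ ω, V k ω ∂P) atTop
        ≤ σ * Real.sqrt (2 / (π * β)) * (Real.exp 1 * (2 + I₁)) * (a * T) ∧
      σ * Real.sqrt (2 / (π * β)) * (2 / Real.exp 1 + I₁) * (a * T)
        ≤ liminf (fun k => ∫ ω, V k ω ∂P) atTop := by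
  set s : ℕ → ℕ → ℝ := fun k j => a * (t k (j + 1) - t k j) with hs
  have hs_pos : ∀ k, ∀ j ∈ Finset.range (ℓ k), 0 < s k j := fun k j hj =>
    mul_pos ha (sub_pos.mpr (hmono k j (Finset.mem_range.mp hj)))
  have hs_sum : ∀ k, ∑ j ∈ Finset.range (ℓ k), s k j = a * T := fun k => by
    rw [hs, ← Finset.mul_sum, Finset.sum_range_sub, htT, ht0, sub_zero]
  have hs_small : ∀ ε > 0, ∀ᶠ k in atTop, ∀ j ∈ Finset.range (ℓ k), s k j < ε :=
    fun ε hε => (Finset.eventually_forall_lt_of_tendsto_sup' _ hmesh (div_pos hε ha)).mono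
      fun k hk j hj => (lt_div_iff₀' ha).mp (hk j hj)
  have hEV (k : ℕ) : ∫ ω, V k ω ∂P = σ * √(2 / (π * β)) *
      ∑ j ∈ Finset.range (ℓ k), s k j * (Gamma (s k j + 1 / 2) / Gamma (s k j + 1)) := by
    simp_rw [hV, hΔ]
    refine integral_sum_mul_abs_mul_sqrt_of_indepFun σ (hs_pos k) hβ
      (fun j hj => .of_map_eq (hZlaw k j (Finset.mem_range.mp hj))) (fun j hj => ?_)
      (fun j _ => hindep k j)
    have := isProbabilityMeasure_gammaMeasure (hs_pos k j hj) hβ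
    exact .of_map_eq (hWlaw k j (Finset.mem_range.mp hj))
  have hlim : Tendsto (fun k => ∫ ω, V k ω ∂P) atTop
      (𝓝 (σ * √(2 / (π * β)) * (√π * (a * T)))) := by
    simp_rw [hEV]
    exact ((tendsto_sum_mul_of_forall_lt (tendsto_nhdsWithin_of_tendsto_nhds
      tendsto_Gamma_add_half_div_Gamma_add_one) hs_pos hs_sum hs_small).const_mul _)
  rw [hlim.limsup_eq, hlim.liminf_eq]
  have hc : 0 ≤ σ * √(2 / (π * β)) * (a * T) := by positivity
  have hupper := sqrt_pi_lt_exp_one_mul_two_add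
    (hI₁ ▸ setIntegral_Ioi_one_rpow_neg_half_mul_exp_neg_nonneg)
  have hlower := two_div_exp_one_add_lt_sqrt_pi
    (hI₁ ▸ setIntegral_Ioi_one_rpow_neg_half_mul_exp_neg_le)
  constructor
  · nlinarith [mul_le_mul_of_nonneg_left hupper.le hc]
  · nlinarith [mul_le_mul_of_nonneg_left hlower.le hc]

/-- **Asymptotic bounds for the expected variation of the centered gamma-gh Lévy increments.**
Along partitions `π_k` of `[0, T]` with mesh tending to `0`, if
`Δ_{k,j} = σ |Z_{k,j}| √(W_{k,j})` with `Z_{k,j}` standard normal independent of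
`W_{k,j} ~ Gamma(a δ_{k,j}, β)`, and `V_k = Σ_j Δ_{k,j}`, then, with
`I₁ = ∫₁^∞ x^(−1/2) e^(−x) dx`,
`limsup_k E[V_k] ≤ σ √(2/(π β)) · e (2 + I₁) · a T` and
`liminf_k E[V_k] ≥ σ √(2/(π β)) · (2/e + I₁) · a T`. -/
theorem expected_variation_bounds_gamma_gh
    {Ω : Type*} [MeasurableSpace Ω] (P : Measure Ω) [IsProbabilityMeasure P]
    (a β σ T : ℝ) (ha : 0 < a) (hβ : 0 < β) (hσ : 0 < σ) (hT : 0 < T)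
    (I₁ : ℝ) (hI₁ : I₁ = ∫ x in Set.Ioi (1 : ℝ), x ^ (-(1 : ℝ) / 2) * Real.exp (-x))
    -- the partitions `π_k = (0 = t k 0 < t k 1 < ⋯ < t k (ℓ k) = T)`
    (ℓ : ℕ → ℕ) (hℓ : ∀ k, 0 < ℓ k) (t : ℕ → ℕ → ℝ)
    (ht0 : ∀ k, t k 0 = 0) (htT : ∀ k, t k (ℓ k) = T)
    (hmono : ∀ k, ∀ j < ℓ k, t k j < t k (j + 1))
    -- the mesh `m(π_k)` tends to `0`
    (hmesh : Tendsto
      (fun k => (Finset.range (ℓ k)).sup'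
        (Finset.nonempty_range_iff.mpr (hℓ k).ne') (fun j => t k (j + 1) - t k j))
      atTop (nhds 0))
    -- the random variables
    (Z W : ℕ → ℕ → Ω → ℝ)
    (hZmeas : ∀ k j, Measurable (Z k j)) (hWmeas : ∀ k j, Measurable (W k j))
    (hZlaw : ∀ k, ∀ j < ℓ k, Measure.map (Z k j) P = gaussianReal 0 1)
    (hWlaw : ∀ k, ∀ j < ℓ k,
      Measure.map (W k j) P = gammaMeasure (a * (t k (j + 1) - t k j)) β)
    (hindep : ∀ k j, IndepFun (Z k j) (W k j) P)
    (Δ : ℕ → ℕ → Ω → ℝ)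
    (hΔ : ∀ k j ω, Δ k j ω = σ * |Z k j ω| * Real.sqrt (W k j ω))
    (V : ℕ → Ω → ℝ) (hV : ∀ k ω, V k ω = ∑ j ∈ Finset.range (ℓ k), Δ k j ω) :
    limsup (fun k => ∫ ω, V k ω ∂P) atTop
        ≤ σ * Real.sqrt (2 / (π * β)) * (Real.exp 1 * (2 + I₁)) * (a * T) ∧
      σ * Real.sqrt (2 / (π * β)) * (2 / Real.exp 1 + I₁) * (a * T)
        ≤ liminf (fun k => ∫ ω, V k ω ∂P) atTop :=
  expected_variation_bounds_gamma_gh_general P a β σ T ha hβ hσ hT I₁ hI₁ ℓ hℓ t ht0 htT hmono hmesh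
    Z W hZlaw hWlaw hindep Δ hΔ V hV
end

section
/- Fix a > 0, β > 0, σ > 0, T > 0. Let (Ω, 𝔄, P) be a probability space and Y : [0, T] × Ω → ℝ a stochastic process such that Y(0) = 0 a.s., the increments of Y over pairwise disjoint intervals are independent, and for all 0 ≤ s < t ≤ T the increment Y(t) − Y(s) has the law of σ Z √W with Z standard normal independent of W ~ Gamma(a(t − s), β) (the centered gamma-gh increment law). For each k ≥ 1 let π_k = (0 = t₀^{(k)} < ⋯ < t_{ℓ(k)}^{(k)} = T) be a partition of [0, T] with mesh tending to 0 as k → ∞, and let V_k = Σ_{j=0}^{ℓ(k)−1} |Y(t_{j+1}^{(k)}) − Y(t_j^{(k)})|. Then P(sup_{k ≥ 1} V_k = +∞) = 0; in particular, almost surely limsup_{k → ∞} V_k < ∞ (the process is almost surely of asymptotic bounded variation). -/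
open MeasureTheory ProbabilityTheory Real Filter

/-- The centered gamma-gh increment law of parameter `(s, β, σ)`: the law of `σ Z √W`
with `Z` standard normal independent of `W ~ Gamma(s, β)`. -/
noncomputable def centeredGammaGH (s β σ : ℝ) : Measure ℝ :=
  Measure.map (fun p : ℝ × ℝ => σ * p.1 * Real.sqrt p.2)
    ((gaussianReal 0 1).prod (gammaMeasure s β))

/-!
The first absolute moment of a centered gamma-gh increment over an interval of length `h` is
`|σ| E|Z| Γ(ah + 1/2) / (Γ(ah) √β)`, which is `O(h)` on `[0, T]` since `Γ(s) ~ 1/s` as `s → 0`.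
By additivity of the variation, the expected variation of `Y` along any finite subset of `[0, T]`
is then at most `C T`. The points of the first `n` partitions form an increasing sequence of
finite sets whose variations dominate `V_0, …, V_n`, so by monotone convergence
`E (sup_k V_k) ≤ C T < ∞`.
-/

open Set
open scoped ENNReal NNReal

theorem Real.continuousOn_Gamma : ContinuousOn Gamma (Ioi 0) := fun _ hx =>
  (differentiableAt_Gamma fun m =>
    ((neg_nonpos.mpr m.cast_nonneg).trans_lt hx).ne').continuousAt.continuousWithinAt

theorem Real.exists_Gamma_add_half_div_Gamma_le (S : ℝ) :
    ∃ K, ∀ s ∈ Ioc 0 S, Gamma (s + 1 / 2) / Gamma s ≤ K * s := by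
  have hcont : ContinuousOn (fun s => Gamma (s + 1 / 2) / Gamma (s + 1)) (Icc 0 S) := by
    refine ContinuousOn.div ?_ ?_ fun s hs => (Gamma_pos_of_pos (by linarith [hs.1])).ne'
    · exact continuousOn_Gamma.comp (continuousOn_id.add continuousOn_const)
        fun s hs => show (0 : ℝ) < s + 1 / 2 by linarith [hs.1]
    · exact continuousOn_Gamma.comp (continuousOn_id.add continuousOn_const)
        fun s hs => show (0 : ℝ) < s + 1 by linarith [hs.1]
  obtain ⟨K, hK⟩ := isCompact_Icc.bddAbove_image hcont
  refine ⟨K, fun s hs => ?_⟩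
  calc Gamma (s + 1 / 2) / Gamma s = Gamma (s + 1 / 2) / Gamma (s + 1) * s := by
        rw [Gamma_add_one hs.1.ne']
        field_simp [hs.1.ne', (Gamma_pos_of_pos hs.1).ne']
    _ ≤ K * s := by
        gcongr
        · exact hs.1.le
        · exact hK ⟨s, Ioc_subset_Icc_self hs, rfl⟩

-- Only a.e.: at `x = 0` and `s = 1/2` the right-hand side contains `0 ^ 0 = 1`.
theorem gammaPDF_mul_sqrt_ae_eq {s β : ℝ} (hs : 0 < s) (hβ : 0 < β) :
    (fun x => gammaPDF s β x * ENNReal.ofReal (√x)) =ᵐ[volume]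
      fun x => ENNReal.ofReal (Gamma (s + 1 / 2) / (Gamma s * √β))
        * gammaPDF (s + 1 / 2) β x := by
  filter_upwards [Measure.ae_ne volume 0] with x hx
  rw [gammaPDF, gammaPDF, gammaPDFReal, gammaPDFReal]
  split_ifs with hx0
  · have hx : 0 < x := lt_of_le_of_ne hx0 (Ne.symm hx)
    have hΓ := Gamma_pos_of_pos hs
    have hΓ' := Gamma_pos_of_pos (show 0 < s + 1 / 2 by linarith)
    rw [← ENNReal.ofReal_mul (by positivity), ← ENNReal.ofReal_mul (by positivity)]
    congr 1
    rw [show s + 1 / 2 - 1 = (s - 1) + 1 / 2 by ring, rpow_add hx, rpow_add hβ,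
      ← sqrt_eq_rpow, ← sqrt_eq_rpow]
    field_simp
  · simp

theorem lintegral_sqrt_gammaMeasure {s β : ℝ} (hs : 0 < s) (hβ : 0 < β) :
    ∫⁻ x, ENNReal.ofReal (√x) ∂gammaMeasure s β
      = ENNReal.ofReal (Gamma (s + 1 / 2) / (Gamma s * √β)) := by
  rw [gammaMeasure, lintegral_withDensity_eq_lintegral_mul _
      (show Measurable (gammaPDF s β) from (measurable_gammaPDFReal s β).ennreal_ofReal)
      continuous_sqrt.measurable.ennreal_ofReal]
  simp only [Pi.mul_apply]
  rw [lintegral_congr_ae (gammaPDF_mul_sqrt_ae_eq hs hβ),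
    lintegral_const_mul' _ _ ENNReal.ofReal_ne_top,
    lintegral_gammaPDF_eq_one (by linarith) hβ, mul_one]

theorem lintegral_abs_centeredGammaGH {s β : ℝ} (σ : ℝ) (hs : 0 < s) (hβ : 0 < β) :
    ∫⁻ x, ENNReal.ofReal |x| ∂centeredGammaGH s β σ
      = ENNReal.ofReal |σ| * (∫⁻ z, ENNReal.ofReal |z| ∂gaussianReal 0 1)
          * ENNReal.ofReal (Gamma (s + 1 / 2) / (Gamma s * √β)) := by
  have := isProbabilityMeasure_gammaMeasure hs hβ
  have hg : Measurable fun p : ℝ × ℝ => σ * p.1 * √p.2 := by fun_prop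
  have hsplit : (fun p : ℝ × ℝ => ENNReal.ofReal |σ * p.1 * √p.2|)
      = fun p => ENNReal.ofReal (|σ| * |p.1|) * ENNReal.ofReal (√p.2) := by
    ext p
    rw [← ENNReal.ofReal_mul (by positivity), abs_mul, abs_mul, abs_of_nonneg (sqrt_nonneg _)]
  rw [centeredGammaGH, lintegral_map measurable_abs.ennreal_ofReal hg, hsplit,
    lintegral_prod_mul (f := fun z => ENNReal.ofReal (|σ| * |z|))
      (g := fun w => ENNReal.ofReal √w) (by fun_prop) (by fun_prop),
    lintegral_sqrt_gammaMeasure hs hβ]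
  simp_rw [ENNReal.ofReal_mul (abs_nonneg σ)]
  rw [lintegral_const_mul _ (by fun_prop)]

theorem exists_lintegral_abs_centeredGammaGH_le {β : ℝ} (σ S : ℝ) (hβ : 0 < β) :
    ∃ C : ℝ≥0, ∀ s ∈ Ioc 0 S,
      ∫⁻ x, ENNReal.ofReal |x| ∂centeredGammaGH s β σ ≤ C * ENNReal.ofReal s := by
  obtain ⟨K, hK⟩ := Real.exists_Gamma_add_half_div_Gamma_le S
  have hZ : ∫⁻ z, ENNReal.ofReal |z| ∂gaussianReal 0 1 ≠ ⊤ :=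
    ((memLp_id_gaussianReal 1).integrable le_rfl).abs.lintegral_lt_top.ne
  refine ⟨(ENNReal.ofReal |σ| * (∫⁻ z, ENNReal.ofReal |z| ∂gaussianReal 0 1)
    * ENNReal.ofReal (K / √β)).toNNReal, fun s hs => ?_⟩
  rw [ENNReal.coe_toNNReal (by finiteness), lintegral_abs_centeredGammaGH σ hs.1 hβ,
    mul_assoc _ (ENNReal.ofReal _), ← ENNReal.ofReal_mul' hs.1.le]
  gcongr
  rw [div_mul_eq_mul_div, ← div_div]
  exact div_le_div_of_nonneg_right (hK s hs) (sqrt_nonneg β)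

theorem eVariationOn_insert_of_isGreatest {α E : Type*} [LinearOrder α] [PseudoEMetricSpace E]
    (f : α → E) {s : Set α} {m x : α} (hm : IsGreatest s m) (hmx : m ≤ x) :
    eVariationOn f (insert x s) = eVariationOn f s + edist (f m) (f x) := by
  rw [insert_eq, union_comm, eVariationOn.union' f hm isLeast_singleton hmx,
    eVariationOn.subsingleton f subsingleton_singleton, add_zero]

theorem ofReal_sum_abs_sub_le_eVariationOn {α : Type*} [LinearOrder α] (f : α → ℝ) {s : Set α}
    {n : ℕ} {u : ℕ → α}
    (hu : MonotoneOn u (Iic n)) (hus : ∀ i ≤ n, u i ∈ s) :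
    ENNReal.ofReal (∑ i ∈ Finset.range n, |f (u (i + 1)) - f (u i)|) ≤ eVariationOn f s := by
  rw [ENNReal.ofReal_sum_of_nonneg fun _ _ => abs_nonneg _]
  simp_rw [← Real.dist_eq, ← edist_dist]
  exact eVariationOn.sum_le_of_monotoneOn_Iic hu hus

section PartitionPoints

variable {α : Type*} [DecidableEq α] {ℓ : ℕ → ℕ} {t : ℕ → ℕ → α}

def partitionPoints (ℓ : ℕ → ℕ) (t : ℕ → ℕ → α) (n : ℕ) : Finset α :=
  (Finset.range (n + 1)).biUnion fun k => (Finset.range (ℓ k + 1)).image (t k)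

theorem mem_partitionPoints {k n j : ℕ} (hkn : k ≤ n) (hj : j ≤ ℓ k) :
    t k j ∈ partitionPoints ℓ t n :=
  Finset.mem_biUnion.mpr ⟨k, Finset.mem_range_succ_iff.mpr hkn,
    Finset.mem_image_of_mem _ (Finset.mem_range_succ_iff.mpr hj)⟩

theorem monotone_partitionPoints : Monotone (partitionPoints ℓ t) := fun _ _ hmn =>
  Finset.biUnion_subset_biUnion_of_subset_left _ (Finset.range_subset_range.mpr (by omega))

theorem coe_partitionPoints_subset {s : Set α} (ht : ∀ k, ∀ j ≤ ℓ k, t k j ∈ s) (n : ℕ) :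
    ↑(partitionPoints ℓ t n) ⊆ s := by
  intro x hx
  obtain ⟨k, -, hx⟩ := Finset.mem_biUnion.mp hx
  obtain ⟨j, hj, rfl⟩ := Finset.mem_image.mp hx
  exact ht k j (Finset.mem_range_succ_iff.mp hj)

end PartitionPoints

section RandomVariation

variable {Ω : Type*} [MeasurableSpace Ω] {P : Measure Ω} {Y : ℝ → Ω → ℝ}

theorem measurable_eVariationOn_finset (hY : ∀ x, Measurable (Y x)) (s : Finset ℝ) :
    Measurable fun ω => eVariationOn (fun x => Y x ω) s := by
  induction s using Finset.induction_on_max with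
  | empty => simp
  | insert x s hlt ih =>
    rcases s.eq_empty_or_nonempty with rfl | hne
    · simp [eVariationOn.subsingleton]
    · simp_rw [Finset.coe_insert, eVariationOn_insert_of_isGreatest _ (s.isGreatest_max' hne)
        (hlt _ (s.max'_mem hne)).le]
      exact ih.add ((hY _).edist (hY x))

theorem lintegral_eVariationOn_finset_le (hY : ∀ x, Measurable (Y x)) {a b : ℝ} {C : ℝ≥0∞}
    (hinc : ∀ u v, a ≤ u → u < v → v ≤ b →
      ∫⁻ ω, edist (Y u ω) (Y v ω) ∂P ≤ C * ENNReal.ofReal (v - u))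
    (s : Finset ℝ) (hs : ↑s ⊆ Icc a b) :
    ∫⁻ ω, eVariationOn (fun x => Y x ω) s ∂P ≤ C * ENNReal.ofReal (b - a) := by
  induction s using Finset.induction_on_max generalizing b with
  | empty => simp
  | insert x s hlt ih =>
    rw [Finset.coe_insert, insert_subset_iff] at hs
    rcases s.eq_empty_or_nonempty with rfl | hne
    · simp [eVariationOn.subsingleton]
    set m := s.max' hne
    have hmx : m < x := hlt _ (s.max'_mem hne)
    have ham : a ≤ m := (hs.2 (s.max'_mem hne)).1
    simp_rw [Finset.coe_insert,
      eVariationOn_insert_of_isGreatest _ (s.isGreatest_max' hne) hmx.le]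
    rw [lintegral_add_left (measurable_eVariationOn_finset hY s)]
    calc _ ≤ C * ENNReal.ofReal (m - a) + C * ENNReal.ofReal (x - m) :=
          add_le_add (ih (fun u v hu huv hv => hinc u v hu huv (hv.trans (hmx.le.trans hs.1.2)))
            fun y hy => ⟨(hs.2 hy).1, s.le_max' y hy⟩) (hinc m x ham hmx hs.1.2)
      _ = C * ENNReal.ofReal (x - a) := by
          rw [← mul_add, ← ENNReal.ofReal_add (by linarith) (by linarith)]
          ring_nf
      _ ≤ C * ENNReal.ofReal (b - a) := by gcongr; exact hs.1.2

theorem ae_iSup_eVariationOn_lt_top (hY : ∀ x, Measurable (Y x)) {a b : ℝ} {C : ℝ≥0}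
    (hinc : ∀ u v, a ≤ u → u < v → v ≤ b →
      ∫⁻ ω, edist (Y u ω) (Y v ω) ∂P ≤ C * ENNReal.ofReal (v - u))
    {F : ℕ → Finset ℝ} (hF : Monotone F) (hFab : ∀ n, ↑(F n) ⊆ Icc a b) :
    ∀ᵐ ω ∂P, ⨆ n, eVariationOn (fun x => Y x ω) (F n) < ⊤ := by
  have hmeas n := measurable_eVariationOn_finset hY (F n)
  have hbound : ∫⁻ ω, ⨆ n, eVariationOn (fun x => Y x ω) (F n) ∂P ≤ C * ENNReal.ofReal (b - a) := by
    rw [lintegral_iSup hmeas fun m n hmn ω => eVariationOn.mono _ (Finset.coe_subset.mpr (hF hmn))]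
    exact iSup_le fun n => lintegral_eVariationOn_finset_le hY hinc (F n) (hFab n)
  exact ae_lt_top (.iSup hmeas) (ne_top_of_le_ne_top (by finiteness) hbound)

theorem exists_lintegral_edist_le_of_map_sub_eq_centeredGammaGH {a β σ T : ℝ} (ha : 0 < a)
    (hβ : 0 < β) (hY : ∀ x, Measurable (Y x))
    (hYlaw : ∀ u v : ℝ, 0 ≤ u → u < v → v ≤ T →
      P.map (fun ω => Y v ω - Y u ω) = centeredGammaGH (a * (v - u)) β σ) :
    ∃ C : ℝ≥0, ∀ u v, 0 ≤ u → u < v → v ≤ T →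
      ∫⁻ ω, edist (Y u ω) (Y v ω) ∂P ≤ C * ENNReal.ofReal (v - u) := by
  obtain ⟨C, hC⟩ := exists_lintegral_abs_centeredGammaGH_le σ (a * T) hβ
  refine ⟨C * a.toNNReal, fun u v hu huv hv => ?_⟩
  calc ∫⁻ ω, edist (Y u ω) (Y v ω) ∂P
      = ∫⁻ x, ENNReal.ofReal |x| ∂centeredGammaGH (a * (v - u)) β σ := by
        simp_rw [edist_comm (Y u _), edist_dist, Real.dist_eq]
        rw [← hYlaw u v hu huv hv, lintegral_map (by fun_prop) (by fun_prop)]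
    _ ≤ C * ENNReal.ofReal (a * (v - u)) := hC _ ⟨by positivity, by nlinarith⟩
    _ = ↑(C * a.toNNReal) * ENNReal.ofReal (v - u) := by
        rw [ENNReal.ofReal_mul ha.le, ENNReal.coe_mul, mul_assoc]
        rfl

end RandomVariation

theorem gamma_gh_levy_asymptotic_bounded_variation_general
    {Ω : Type*} [MeasurableSpace Ω] (P : Measure Ω)
    (a β σ T : ℝ) (ha : 0 < a) (hβ : 0 < β)
    -- the process on `[0, T]`
    (Y : ℝ → Ω → ℝ) (hYmeas : ∀ u, Measurable (Y u))
    -- increment laws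
    (hYlaw : ∀ u v : ℝ, 0 ≤ u → u < v → v ≤ T →
      Measure.map (fun ω => Y v ω - Y u ω) P = centeredGammaGH (a * (v - u)) β σ)
    -- the partitions `π_k = (0 = t k 0 < t k 1 < ⋯ < t k (ℓ k) = T)`
    (ℓ : ℕ → ℕ) (t : ℕ → ℕ → ℝ)
    (ht0 : ∀ k, t k 0 = 0) (htT : ∀ k, t k (ℓ k) = T)
    (hmono : ∀ k, ∀ j < ℓ k, t k j < t k (j + 1))
    -- the variations
    (V : ℕ → Ω → ℝ)
    (hV : ∀ k ω, V k ω = ∑ j ∈ Finset.range (ℓ k), |Y (t k (j + 1)) ω - Y (t k j) ω|) :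
    P {ω | (⨆ k, ENNReal.ofReal (V k ω)) = ⊤} = 0 ∧
      ∀ᵐ ω ∂P, limsup (fun k => ENNReal.ofReal (V k ω)) atTop < ⊤ := by
  obtain ⟨C, hinc⟩ := exists_lintegral_edist_le_of_map_sub_eq_centeredGammaGH ha hβ hYmeas hYlaw
  have htk k : StrictMonoOn (t k) (Iic (ℓ k)) := strictMonoOn_Iic_of_lt_succ (hmono k)
  have hpts k : ∀ j ≤ ℓ k, t k j ∈ Icc 0 T := fun j hj => by
    simpa only [ht0, htT] using
      ((htk k).monotoneOn.mono Icc_subset_Iic_self).mapsTo_Icc ⟨j.zero_le, hj⟩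
  have hsup ω : ⨆ k, ENNReal.ofReal (V k ω)
      ≤ ⨆ n, eVariationOn (fun x => Y x ω) (partitionPoints ℓ t n) :=
    iSup_mono fun k => hV k ω ▸ ofReal_sum_abs_sub_le_eVariationOn _ (htk k).monotoneOn
      fun _ hj => mem_partitionPoints le_rfl hj
  have hfin := ae_iSup_eVariationOn_lt_top hYmeas hinc monotone_partitionPoints
    (coe_partitionPoints_subset hpts)
  refine ⟨measure_mono_null (fun ω hω => ?_) (ae_iff.mp hfin), ?_⟩
  · exact (top_le_iff.mp (hω ▸ hsup ω)).not_lt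
  · filter_upwards [hfin] with ω hω
    exact (limsup_le_iSup.trans (hsup ω)).trans_lt hω

/-- **The centered gamma-gh Lévy process is a.s. of asymptotic bounded variation.**
Let `Y` be a process on `[0, T]` with `Y 0 = 0` a.s., independent increments, and
increments `Y t − Y s ∼ centeredGammaGH (a (t − s)) β σ`. Along any sequence of
partitions `π_k` of `[0, T]` with mesh tending to `0`, let `V_k` be the variation of `Y`
along `π_k`. Then `P(sup_k V_k = +∞) = 0`; in particular, almost surely
`limsup_k V_k < ∞`. -/
theorem gamma_gh_levy_asymptotic_bounded_variation
    {Ω : Type*} [MeasurableSpace Ω] (P : Measure Ω) [IsProbabilityMeasure P]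
    (a β σ T : ℝ) (ha : 0 < a) (hβ : 0 < β) (hσ : 0 < σ) (hT : 0 < T)
    -- the process on `[0, T]`
    (Y : ℝ → Ω → ℝ) (hYmeas : ∀ u, Measurable (Y u))
    (hY0 : ∀ᵐ ω ∂P, Y 0 ω = 0)
    -- independent increments
    (hYindep : ∀ (m : ℕ) (u : ℕ → ℝ), u 0 = 0 → (∀ i < m, u i < u (i + 1)) →
      u m ≤ T →
      iIndepFun
        (fun j : Fin m => fun ω => Y (u ((j : ℕ) + 1)) ω - Y (u (j : ℕ)) ω) P)
    -- increment laws
    (hYlaw : ∀ u v : ℝ, 0 ≤ u → u < v → v ≤ T →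
      Measure.map (fun ω => Y v ω - Y u ω) P = centeredGammaGH (a * (v - u)) β σ)
    -- the partitions `π_k = (0 = t k 0 < t k 1 < ⋯ < t k (ℓ k) = T)`
    (ℓ : ℕ → ℕ) (hℓ : ∀ k, 0 < ℓ k) (t : ℕ → ℕ → ℝ)
    (ht0 : ∀ k, t k 0 = 0) (htT : ∀ k, t k (ℓ k) = T)
    (hmono : ∀ k, ∀ j < ℓ k, t k j < t k (j + 1))
    -- the mesh `m(π_k)` tends to `0`
    (hmesh : Tendsto
      (fun k => (Finset.range (ℓ k)).sup'
        (Finset.nonempty_range_iff.mpr (hℓ k).ne') (fun j => t k (j + 1) - t k j))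
      atTop (nhds 0))
    -- the variations
    (V : ℕ → Ω → ℝ)
    (hV : ∀ k ω, V k ω = ∑ j ∈ Finset.range (ℓ k), |Y (t k (j + 1)) ω - Y (t k j) ω|) :
    P {ω | (⨆ k, ENNReal.ofReal (V k ω)) = ⊤} = 0 ∧
      ∀ᵐ ω ∂P, limsup (fun k => ENNReal.ofReal (V k ω)) atTop < ⊤ :=
  gamma_gh_levy_asymptotic_bounded_variation_general P a β σ T ha hβ Y hYmeas hYlaw ℓ t ht0 htT
    hmono V hV
end
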